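/- arXiv:2209.11958 — 2 statements merged into one kernel-verified Lean document; each statement's English description precedes it below -/
import Mathlib

section
/- For a real matrix M that is strictly diagonally dominant with positive diagonal entries (M_ii > Σ_{k≠i} |M_ik| for all i), there exists a positive definite diagonal matrix Ψ and a real number η > 0 such that ΨM + Mᵀ Ψ ≥ η·Ψ (in the Loewner order). -/
/-!
With `P k i = |M k i| / M k k` off the diagonal, `P` is nonnegative with row sums `< 1`. A discrete
minimum principle makes `1 - P` invertible with nonnegative inverse, so `z = 1ᵀ (1 - P)⁻¹ ≥ 1`
solves `z = 1 + z P`. The weights `ψ i = z i / M i i` make `ΨM` strictly column diagonally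
dominant, and it is row diagonally dominant because `M` is. So for small `η > 0` the symmetric
matrix `ΨM + MᵀΨ - ηΨ` is diagonally dominant, and Gershgorin's theorem puts its eigenvalues in
`[0, ∞)`.
-/

open Matrix Finset
open scoped ComplexOrder

namespace Matrix

variable {ι : Type*} [Fintype ι]

theorem IsHermitian.posSemidef_of_sum_norm_le {𝕜 : Type*} [RCLike 𝕜] [DecidableEq ι]
    {A : Matrix ι ι 𝕜} (hA : A.IsHermitian)
    (hdom : ∀ i, ∑ j ∈ univ.erase i, ‖A i j‖ ≤ RCLike.re (A i i)) : A.PosSemidef := by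
  refine hA.posSemidef_iff_eigenvalues_nonneg.2 fun i => ?_
  set μ := hA.eigenvalues i
  have hμ : Module.End.HasEigenvalue (toLin' A) (μ : 𝕜) := by
    rw [Module.End.hasEigenvalue_iff_mem_spectrum, spectrum_toLin']
    exact spectrum.algebraMap_mem 𝕜 (hA.eigenvalues_mem_spectrum_real i)
  obtain ⟨k, hk⟩ := eigenvalue_mem_ball hμ
  rw [mem_closedBall_iff_norm] at hk
  have hre : RCLike.re (A k k) - μ ≤ ‖(μ : 𝕜) - A k k‖ := by
    simpa [norm_sub_rev] using RCLike.re_le_norm (A k k - μ)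
  show 0 ≤ μ
  linarith [hdom k]

section Substochastic

variable {P : Matrix ι ι ℝ}

theorem nonneg_of_mulVec_le_self (hP : ∀ i j, 0 ≤ P i j) (hrow : ∀ i, ∑ j, P i j < 1)
    {y : ι → ℝ} (hy : P *ᵥ y ≤ y) : 0 ≤ y := by
  by_contra hneg
  obtain ⟨j, hj⟩ := not_forall.1 hneg
  have : Nonempty ι := ⟨j⟩
  obtain ⟨i, hi⟩ := Finite.exists_min y
  have hyi : y i < 0 := (hi j).trans_lt (not_le.1 hj)
  have : y i < (P *ᵥ y) i := calc
    y i < (∑ j, P i j) * y i := by nlinarith [hrow i]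
    _ = ∑ j, P i j * y i := sum_mul ..
    _ ≤ ∑ j, P i j * y j := sum_le_sum fun j _ => mul_le_mul_of_nonneg_left (hi j) (hP i j)
  exact (hy i).not_gt this

theorem exists_one_le_eq_one_add_vecMul [DecidableEq ι] (hP : ∀ i j, 0 ≤ P i j)
    (hrow : ∀ i, ∑ j, P i j < 1) : ∃ z : ι → ℝ, (∀ i, 1 ≤ z i) ∧ z = 1 + z ᵥ* P := by
  have hmono : ∀ y, 0 ≤ (1 - P) *ᵥ y → 0 ≤ y := fun y hy =>
    nonneg_of_mulVec_le_self hP hrow (by rwa [sub_mulVec, one_mulVec, sub_nonneg] at hy)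
  have hunit : IsUnit (1 - P) := by
    refine mulVec_injective_iff_isUnit.1 fun x y hxy => ?_
    have h0 : (1 - P) *ᵥ (x - y) = 0 := by rw [mulVec_sub, hxy, sub_self]
    exact sub_eq_zero.1 (le_antisymm (by simpa using hmono (y - x) (by simp [mulVec_sub, hxy]))
      (hmono (x - y) h0.ge))
  have hdet := (isUnit_iff_isUnit_det _).1 hunit
  set N := (1 - P)⁻¹
  have hN : ∀ i j, 0 ≤ N i j := fun i j => by
    have := hmono (N *ᵥ Pi.single j 1) (by
      rw [mulVec_mulVec, mul_nonsing_inv _ hdet, one_mulVec]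
      exact Pi.single_nonneg.2 zero_le_one)
    simpa [mulVec_single_one] using this i
  set z := 1 ᵥ* N
  have hz : z = 1 + z ᵥ* P := by
    have : z ᵥ* (1 - P) = 1 := by rw [vecMul_vecMul, nonsing_inv_mul _ hdet, vecMul_one]
    rwa [vecMul_sub, vecMul_one, sub_eq_iff_eq_add] at this
  have hz0 : ∀ k, 0 ≤ z k := fun k => sum_nonneg fun j _ => by simpa using hN j k
  refine ⟨z, fun i => ?_, hz⟩
  rw [hz, Pi.add_apply, Pi.one_apply, le_add_iff_nonneg_right]
  exact sum_nonneg fun k _ => mul_nonneg (hz0 k) (hP k i)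

end Substochastic

theorem exists_pos_weights_colDominant_of_rowDominant [DecidableEq ι] {M : Matrix ι ι ℝ}
    (hdom : ∀ i, ∑ k ∈ univ.erase i, |M i k| < M i i) :
    ∃ ψ : ι → ℝ, (∀ i, 0 < ψ i) ∧ ∀ i, ∑ k ∈ univ.erase i, |M k i| * ψ k < M i i * ψ i := by
  have hdiag i : 0 < M i i := (sum_nonneg fun _ _ => abs_nonneg _).trans_lt (hdom i)
  let P : Matrix ι ι ℝ := of fun k i => if k = i then 0 else |M k i| / M k k
  have hP : ∀ k i, 0 ≤ P k i := fun k i => by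
    simp only [P, of_apply]
    split_ifs
    exacts [le_rfl, div_nonneg (abs_nonneg _) (hdiag k).le]
  have hrow : ∀ k, ∑ i, P k i < 1 := fun k => calc
    ∑ i, P k i = ∑ i ∈ univ.erase k, |M k i| / M k k := by
      rw [← sum_erase univ (a := k) (by simp [P])]
      exact sum_congr rfl fun i hi => by simp [P, (ne_of_mem_erase hi).symm]
    _ < 1 := by rw [← sum_div, div_lt_one (hdiag k)]; exact hdom k
  obtain ⟨z, hz1, hz⟩ := exists_one_le_eq_one_add_vecMul hP hrow
  refine ⟨fun i => z i / M i i, fun i => div_pos (one_pos.trans_le (hz1 i)) (hdiag i), fun i => ?_⟩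
  calc ∑ k ∈ univ.erase i, |M k i| * (z k / M k k)
      = ∑ k ∈ univ.erase i, z k * P k i :=
        sum_congr rfl fun k hk => by simp [P, ne_of_mem_erase hk]; ring
    _ = (z ᵥ* P) i := sum_erase _ (by simp [P])
    _ < z i := by linarith [congrFun hz i, show (1 + z ᵥ* P) i = 1 + (z ᵥ* P) i from rfl]
    _ = M i i * (z i / M i i) := (mul_div_cancel₀ _ (hdiag i).ne').symm

theorem posSemidef_diagonal_mul_add_transpose_mul_diagonal_sub [DecidableEq ι]
    {M : Matrix ι ι ℝ} {ψ : ι → ℝ} {η : ℝ} (hψ : ∀ i, 0 < ψ i)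
    (hrow : ∀ i, η ≤ M i i - ∑ k ∈ univ.erase i, |M i k|)
    (hcol : ∀ i, ∑ k ∈ univ.erase i, |M k i| * ψ k ≤ M i i * ψ i) :
    (diagonal ψ * M + Mᵀ * diagonal ψ - η • diagonal ψ).PosSemidef := by
  set S := diagonal ψ * M + Mᵀ * diagonal ψ - η • diagonal ψ
  have hS : ∀ i k, S i k = ψ i * M i k + M k i * ψ k - η * diagonal ψ i k := fun i k => by
    simp [S, diagonal_mul, mul_diagonal]
  refine IsHermitian.posSemidef_of_sum_norm_le ?_ fun i => ?_
  · refine IsHermitian.ext fun i k => ?_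
    show star (S k i) = S i k
    rw [star_trivial, hS, hS, diagonal_apply, diagonal_apply]
    rcases eq_or_ne i k with rfl | h
    · rfl
    · rw [if_neg h.symm, if_neg h]; ring
  · have hoff : ∀ k ∈ univ.erase i, ‖S i k‖ ≤ ψ i * |M i k| + |M k i| * ψ k := fun k hk => by
      rw [Real.norm_eq_abs, hS, diagonal_apply_ne _ (ne_of_mem_erase hk).symm, mul_zero, sub_zero]
      refine (abs_add_le _ _).trans_eq ?_
      rw [abs_mul, abs_mul, abs_of_pos (hψ i), abs_of_pos (hψ k)]
    calc ∑ k ∈ univ.erase i, ‖S i k‖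
        ≤ ψ i * ∑ k ∈ univ.erase i, |M i k| + ∑ k ∈ univ.erase i, |M k i| * ψ k := by
          rw [mul_sum, ← sum_add_distrib]; exact sum_le_sum hoff
      _ ≤ ψ i * (M i i - η) + M i i * ψ i :=
          add_le_add (mul_le_mul_of_nonneg_left (by linarith [hrow i]) (hψ i).le) (hcol i)
      _ = RCLike.re (S i i) := by rw [RCLike.re_to_real, hS, diagonal_apply_eq]; ring

end Matrix

/-- For a strictly diagonally dominant matrix with positive diagonal there is a positive
    diagonal matrix Ψ and η > 0 with ΨM + MᵀΨ ≥ ηΨ in the Loewner order. -/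
theorem diag_dominant_diagonal_lyapunov
    {n : ℕ} (M : Matrix (Fin n) (Fin n) ℝ)
    (hdom : ∀ i, ∑ k ∈ Finset.univ.erase i, |M i k| < M i i) :
    ∃ (ψ : Fin n → ℝ) (η : ℝ), (∀ i, 0 < ψ i) ∧ 0 < η ∧
      (Matrix.diagonal ψ * M + Mᵀ * Matrix.diagonal ψ
        - η • Matrix.diagonal ψ).PosSemidef := by
  obtain ⟨ψ, hψ, hcol⟩ := exists_pos_weights_colDominant_of_rowDominant hdom
  obtain ⟨η, hrow, hη⟩ : ∃ η, (∀ i, η ≤ M i i - ∑ k ∈ univ.erase i, |M i k|) ∧ 0 < η :=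
    ((Filter.eventually_all.2 fun i => (eventually_le_nhds (sub_pos.2 (hdom i))).filter_mono
      nhdsWithin_le_nhds).and (self_mem_nhdsWithin (s := Set.Ioi 0))).exists
  exact ⟨ψ, η, hψ, hη,
    posSemidef_diagonal_mul_add_transpose_mul_diagonal_sub hψ hrow fun i => (hcol i).le⟩
end

section
/- If M is strictly diagonally dominant with positive diagonal and nonpositive off-diagonal entries (an M-matrix), then M⁻¹ has all nonnegative entries; consequently each vector M⁻¹ B_oj 1_m has nonnegative entries, and together with the row-sum-one property, the point Σ_j (M⁻¹ B_oj 1_m)_i · x_j is a convex combination of the leader states {x_{m+1},…,x_N} for each i. -/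
/-!
A matrix with nonpositive off-diagonal entries and positive row sums obeys a discrete minimum
principle: if `M *ᵥ y ≥ 0`, then at a minimising index `i₀` of `y` one has
`0 ≤ (M *ᵥ y) i₀ ≤ (∑ k, M i₀ k) * y i₀`, so `y ≥ 0`. Applied to the columns of `M⁻¹`, whose
images are unit vectors, this gives `M⁻¹ ≥ 0`. Since `L_F 1 = 0`, the vectors `B_oj 1` sum to
`M 1`, so the nonnegative weights `M⁻¹ B_oj 1` sum to `M⁻¹ M 1 = 1` in every coordinate.
-/

open Matrix Finset

namespace Matrix

variable {ι R : Type*} [Fintype ι]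

theorem sum_row_pos_of_diag_dominant [DecidableEq ι] [CommRing R] [LinearOrder R]
    [IsStrictOrderedRing R] {M : Matrix ι ι R} (hoff : ∀ i k, k ≠ i → M i k ≤ 0)
    (hdom : ∀ i, ∑ k ∈ univ.erase i, |M i k| < M i i) (i : ι) : 0 < ∑ k, M i k := by
  have habs : ∑ k ∈ univ.erase i, |M i k| = -∑ k ∈ univ.erase i, M i k := by
    rw [← sum_neg_distrib]
    exact sum_congr rfl fun k hk => abs_of_nonpos (hoff i k (ne_of_mem_erase hk))
  rw [← add_sum_erase univ _ (mem_univ i)]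
  linarith [hdom i]

theorem nonneg_of_nonneg_mulVec [CommRing R] [LinearOrder R] [IsStrictOrderedRing R]
    {M : Matrix ι ι R} (hoff : ∀ i k, k ≠ i → M i k ≤ 0) (hrow : ∀ i, 0 < ∑ k, M i k)
    {y : ι → R} (hy : 0 ≤ M *ᵥ y) : 0 ≤ y := by
  intro i
  by_contra! hi
  obtain ⟨i₀, -, hmin⟩ := exists_min_image univ y ⟨i, mem_univ i⟩
  have hterm : ∀ k, M i₀ k * y k ≤ M i₀ k * y i₀ := by
    intro k
    rcases eq_or_ne k i₀ with rfl | hk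
    · rfl
    · exact mul_le_mul_of_nonpos_left (hmin k (mem_univ k)) (hoff i₀ k hk)
  have : (M *ᵥ y) i₀ < 0 := calc
    (M *ᵥ y) i₀ = ∑ k, M i₀ k * y k := rfl
    _ ≤ (∑ k, M i₀ k) * y i₀ := by rw [sum_mul]; exact sum_le_sum fun k _ => hterm k
    _ < 0 := mul_neg_of_pos_of_neg (hrow i₀) ((hmin i (mem_univ i)).trans_lt hi)
  exact (hy i₀).not_gt this

theorem inv_nonneg_of_nonneg_mulVec [DecidableEq ι] [CommRing R] [PartialOrder R]
    [IsOrderedRing R]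
    {M : Matrix ι ι R} (hM : IsUnit M.det) (hmono : ∀ y, 0 ≤ M *ᵥ y → 0 ≤ y) (i k : ι) :
    0 ≤ M⁻¹ i k := by
  have hcol : M *ᵥ (fun j => M⁻¹ j k) = Pi.single k 1 := by
    ext i'
    change (M * M⁻¹) i' k = _
    rw [mul_nonsing_inv M hM, one_apply, Pi.single_apply, eq_comm]
  exact hmono _ (hcol ▸ Pi.single_nonneg.mpr zero_le_one) i

end Matrix

/-- An M-matrix has entrywise nonnegative inverse; consequently the vectors
    M⁻¹ B_oj 1 give convex-combination coefficients of the leader states. -/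
theorem m_matrix_inverse_nonneg_convex_combination
    {m r n : ℕ} (LF : Matrix (Fin m) (Fin m) ℝ)
    (hLFoff : ∀ i k, k ≠ i → LF i k ≤ 0)
    (hLFrow : LF.mulVec (fun _ => 1) = 0)
    (b : Fin r → Fin m → ℝ) (hb : ∀ j i, 0 ≤ b j i)
    (M : Matrix (Fin m) (Fin m) ℝ)
    (hM : M = LF + ∑ j, Matrix.diagonal (b j))
    (hdom : ∀ i, ∑ k ∈ Finset.univ.erase i, |M i k| < M i i)
    (x : Fin r → Fin n → ℝ) :
    (∀ i k, 0 ≤ M⁻¹ i k) ∧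
    (∀ i, (∀ j, 0 ≤ M⁻¹.mulVec ((Matrix.diagonal (b j)).mulVec (fun _ => 1)) i) ∧
      ∑ j, M⁻¹.mulVec ((Matrix.diagonal (b j)).mulVec (fun _ => 1)) i = 1 ∧
      (∑ j, M⁻¹.mulVec ((Matrix.diagonal (b j)).mulVec (fun _ => 1)) i • x j)
        ∈ convexHull ℝ (Set.range x)) := by
  have hoff : ∀ i k, k ≠ i → M i k ≤ 0 := fun i k hk => by
    simpa [hM, Matrix.sum_apply, diagonal_apply_ne _ hk.symm] using hLFoff i k hk
  have hdet : IsUnit M.det := isUnit_iff_ne_zero.mpr <| det_ne_zero_of_sum_row_lt_diag fun i => by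
    simpa only [Real.norm_eq_abs] using (hdom i).trans_le (le_abs_self _)
  have hinv : ∀ i k, 0 ≤ M⁻¹ i k := inv_nonneg_of_nonneg_mulVec hdet fun _ =>
    nonneg_of_nonneg_mulVec hoff (sum_row_pos_of_diag_dominant hoff hdom)
  have hcoef : ∀ j, diagonal (b j) *ᵥ (fun _ => 1) = b j := fun j => by
    ext; simp [mulVec_diagonal]
  have hones : ∑ j, b j = M *ᵥ (fun _ => 1) := by
    simp only [hM, add_mulVec, hLFrow, zero_add, sum_mulVec, hcoef]
  have hw_nonneg : ∀ i j, 0 ≤ (M⁻¹ *ᵥ b j) i := fun i j =>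
    dotProduct_nonneg_of_nonneg (hinv i) (hb j)
  have hw_sum : ∀ i, ∑ j, (M⁻¹ *ᵥ b j) i = 1 := fun i => by
    rw [← Finset.sum_apply, ← mulVec_sum, hones, mulVec_mulVec, nonsing_inv_mul M hdet,
      one_mulVec]
  simp only [hcoef]
  exact ⟨hinv, fun i => ⟨(hw_nonneg i ·), hw_sum i, (convex_convexHull ℝ _).sum_mem
    (fun j _ => hw_nonneg i j) (hw_sum i) fun j _ => subset_convexHull ℝ _ ⟨j, rfl⟩⟩⟩
end
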